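/- The single-qubit amplitude damping channel with parameter γ ∈ (0,1) is strictly contractive in trace norm: there exists r < 1 (namely r = max(1 − γ/2, γ/2) suffices, and in fact r = √(1−γ) works) such that ‖D(ρ) − D(σ)‖₁ ≤ r‖ρ − σ‖₁ for all single-qubit density operators ρ, σ. -/

import Mathlib

open Matrix ComplexOrder

/-- Trace norm of a complex matrix: `‖A‖₁ = Tr √(AᴴA)`. -/
noncomputable def traceNorm {n : Type*} [Fintype n] [DecidableEq n]
    (A : Matrix n n ℂ) : ℝ :=
  (((posSemidef_conjTranspose_mul_self A).1.eigenvectorUnitary : Matrix n n ℂ) *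
      diagonal (((↑) : ℝ → ℂ) ∘ Real.sqrt ∘ (posSemidef_conjTranspose_mul_self A).1.eigenvalues) *
      (star (posSemidef_conjTranspose_mul_self A).1.eigenvectorUnitary : Matrix n n ℂ)).trace.re

/-- A density operator: positive semidefinite with unit trace. -/
def IsDensity {n : Type*} [Fintype n] [DecidableEq n] (ρ : Matrix n n ℂ) : Prop :=
  ρ.PosSemidef ∧ ρ.trace = 1

/-- First Kraus operator of the amplitude damping channel. -/
noncomputable def K0 (γ : ℝ) : Matrix (Fin 2) (Fin 2) ℂ :=
  !![1, 0; 0, (Real.sqrt (1 - γ) : ℂ)]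

/-- Second Kraus operator of the amplitude damping channel. -/
noncomputable def K1 (γ : ℝ) : Matrix (Fin 2) (Fin 2) ℂ :=
  !![0, (Real.sqrt γ : ℂ); 0, 0]

/-- The single-qubit amplitude damping channel. -/
noncomputable def AD (γ : ℝ) (ρ : Matrix (Fin 2) (Fin 2) ℂ) : Matrix (Fin 2) (Fin 2) ℂ :=
  K0 γ * ρ * (K0 γ)ᴴ + K1 γ * ρ * (K1 γ)ᴴ


/-!
The difference of two qubit states is a traceless Hermitian matrix `!![a, b; b̄, -a]`; its square
is `(a² + |b|²) • 1`, so its trace norm is `2 √(a² + |b|²)`. The channel acts on such a matrix by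
`a ↦ (1 - γ) a`, `b ↦ √(1 - γ) b`, which shrinks `a² + |b|²` by at least the factor `1 - γ`.
Hence the channel contracts trace distances by `√(1 - γ) ≤ 1 - γ / 2`.
-/

theorem traceNorm_eq_sum_sqrt_eigenvalues {n : Type*} [Fintype n] [DecidableEq n]
    (A : Matrix n n ℂ) :
    traceNorm A = ∑ i, √((posSemidef_conjTranspose_mul_self A).1.eigenvalues i) := by
  rw [traceNorm, trace_mul_cycle, Unitary.coe_star_mul_self, one_mul, trace_diagonal]
  simp

theorem traceNorm_nonneg {n : Type*} [Fintype n] [DecidableEq n] (A : Matrix n n ℂ) :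
    0 ≤ traceNorm A := by
  rw [traceNorm_eq_sum_sqrt_eigenvalues]
  positivity

theorem Matrix.IsHermitian.eigenvalues_eq_of_eq_smul_one {n : Type*} [Fintype n] [DecidableEq n]
    {A : Matrix n n ℂ} (hA : A.IsHermitian) {c : ℝ} (h : A = (c : ℂ) • 1) (i : n) :
    hA.eigenvalues i = c := by
  rw [hA.eigenvalues_eq]
  subst h
  simp [smul_mulVec, dotProduct_comm (star _), ← EuclideanSpace.inner_eq_star_dotProduct,
    hA.eigenvectorBasis.orthonormal.1 i]

theorem traceNorm_eq_of_conjTranspose_mul_self_eq_smul_one {n : Type*} [Fintype n]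
    [DecidableEq n] (A : Matrix n n ℂ) {c : ℝ} (hc : 0 ≤ c)
    (h : Aᴴ * A = ((c ^ 2 : ℝ) : ℂ) • 1) : traceNorm A = Fintype.card n * c := by
  simp [traceNorm_eq_sum_sqrt_eigenvalues, Matrix.IsHermitian.eigenvalues_eq_of_eq_smul_one _ h,
    Real.sqrt_sq hc]

def tracelessHermitian (a : ℝ) (b : ℂ) : Matrix (Fin 2) (Fin 2) ℂ :=
  !![(a : ℂ), b; star b, -(a : ℂ)]

theorem Matrix.IsHermitian.eq_tracelessHermitian {Δ : Matrix (Fin 2) (Fin 2) ℂ}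
    (hΔ : Δ.IsHermitian) (htr : Δ.trace = 0) : Δ = tracelessHermitian (Δ 0 0).re (Δ 0 1) := by
  have h00 : ((Δ 0 0).re : ℂ) = Δ 0 0 := Complex.conj_eq_iff_re.mp (hΔ.apply 0 0)
  have h10 : star (Δ 0 1) = Δ 1 0 := hΔ.apply 1 0
  have h11 : Δ 1 1 = -Δ 0 0 := by
    rw [trace_fin_two] at htr
    linear_combination htr
  ext i j
  fin_cases i <;> fin_cases j <;> simp [tracelessHermitian, h00, h10, h11]

theorem tracelessHermitian_conjTranspose_mul_self (a : ℝ) (b : ℂ) :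
    (tracelessHermitian a b)ᴴ * tracelessHermitian a b
      = ((a ^ 2 + Complex.normSq b : ℝ) : ℂ) • 1 := by
  ext i j
  fin_cases i <;> fin_cases j <;>
    simp [tracelessHermitian, mul_apply, Fin.sum_univ_two, conjTranspose_apply] <;>
    push_cast [Complex.mul_conj, Complex.mul_conj', ← Complex.normSq_eq_conj_mul_self] <;> ring

theorem traceNorm_tracelessHermitian (a : ℝ) (b : ℂ) :
    traceNorm (tracelessHermitian a b) = 2 * √(a ^ 2 + Complex.normSq b) := by
  have hnonneg : 0 ≤ a ^ 2 + Complex.normSq b := add_nonneg (sq_nonneg a) (Complex.normSq_nonneg b)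
  rw [traceNorm_eq_of_conjTranspose_mul_self_eq_smul_one _ (Real.sqrt_nonneg _)
      (by rw [Real.sq_sqrt hnonneg, tracelessHermitian_conjTranspose_mul_self]),
    Fintype.card_fin, Nat.cast_two]

theorem conjTranspose_K0 (γ : ℝ) : (K0 γ)ᴴ = K0 γ := by
  ext i j
  fin_cases i <;> fin_cases j <;> simp [K0]

theorem conjTranspose_K1 (γ : ℝ) : (K1 γ)ᴴ = !![0, 0; (√γ : ℂ), 0] := by
  ext i j
  fin_cases i <;> fin_cases j <;> simp [K1]

theorem AD_eq {γ : ℝ} (hγ : γ ∈ Set.Icc (0 : ℝ) 1) (ρ : Matrix (Fin 2) (Fin 2) ℂ) :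
    AD γ ρ = !![ρ 0 0 + γ * ρ 1 1, √(1 - γ) * ρ 0 1; √(1 - γ) * ρ 1 0, (1 - γ) * ρ 1 1] := by
  have h1 : ((√(1 - γ) : ℝ) : ℂ) ^ 2 = 1 - γ := by
    rw [← Complex.ofReal_pow, Real.sq_sqrt (by linarith [hγ.2]), Complex.ofReal_sub,
      Complex.ofReal_one]
  have h2 : ((√γ : ℝ) : ℂ) ^ 2 = γ := by
    rw [← Complex.ofReal_pow, Real.sq_sqrt hγ.1]
  rw [AD, conjTranspose_K0, conjTranspose_K1, eta_fin_two ρ, K0, K1]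
  ext i j
  fin_cases i <;> fin_cases j <;> simp <;>
    first
      | ring1
      | linear_combination ρ 1 1 * h1
      | linear_combination ρ 1 1 * h2

theorem AD_sub (γ : ℝ) (ρ σ : Matrix (Fin 2) (Fin 2) ℂ) : AD γ ρ - AD γ σ = AD γ (ρ - σ) := by
  simp only [AD, Matrix.sub_mul, Matrix.mul_sub]
  abel

theorem AD_tracelessHermitian {γ : ℝ} (hγ : γ ∈ Set.Icc (0 : ℝ) 1) (a : ℝ) (b : ℂ) :
    AD γ (tracelessHermitian a b) = tracelessHermitian ((1 - γ) * a) (√(1 - γ) * b) := by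
  rw [AD_eq hγ]
  ext i j
  fin_cases i <;> fin_cases j <;> simp [tracelessHermitian]
  ring

theorem traceNorm_AD_tracelessHermitian_le {γ : ℝ} (hγ : γ ∈ Set.Icc (0 : ℝ) 1)
    (a : ℝ) (b : ℂ) :
    traceNorm (AD γ (tracelessHermitian a b)) ≤ √(1 - γ) * traceNorm (tracelessHermitian a b) := by
  have h1γ : 0 ≤ 1 - γ := by linarith [hγ.2]
  rw [AD_tracelessHermitian hγ, traceNorm_tracelessHermitian, traceNorm_tracelessHermitian,
    Complex.normSq_mul, Complex.normSq_ofReal, Real.mul_self_sqrt h1γ]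
  calc 2 * √(((1 - γ) * a) ^ 2 + (1 - γ) * Complex.normSq b)
      ≤ 2 * √((1 - γ) * (a ^ 2 + Complex.normSq b)) := by
        gcongr
        nlinarith [mul_nonneg (mul_nonneg h1γ hγ.1) (sq_nonneg a)]
    _ = √(1 - γ) * (2 * √(a ^ 2 + Complex.normSq b)) := by
        rw [Real.sqrt_mul h1γ]
        ring

/-- The amplitude damping channel with `γ ∈ (0,1)` is strictly contractive in trace norm,
with contraction constant `r = max (1 - γ/2) (γ/2) < 1`. -/
theorem amplitude_damping_strictly_contractive
    (γ : ℝ) (hγ : γ ∈ Set.Ioo (0 : ℝ) 1) :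
    max (1 - γ / 2) (γ / 2) < 1 ∧
      ∀ ρ σ : Matrix (Fin 2) (Fin 2) ℂ, IsDensity ρ → IsDensity σ →
        traceNorm (AD γ ρ - AD γ σ) ≤ max (1 - γ / 2) (γ / 2) * traceNorm (ρ - σ) := by
  obtain ⟨hγ0, hγ1⟩ := hγ
  have hsqrt : √(1 - γ) ≤ 1 - γ / 2 := Real.sqrt_le_iff.2 ⟨by linarith, by nlinarith⟩
  refine ⟨max_lt (by linarith) (by linarith), fun ρ σ hρ hσ => ?_⟩
  have htr : (ρ - σ).trace = 0 := by rw [trace_sub, hρ.2, hσ.2, sub_self]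
  calc traceNorm (AD γ ρ - AD γ σ) = traceNorm (AD γ (ρ - σ)) := by rw [AD_sub]
    _ ≤ √(1 - γ) * traceNorm (ρ - σ) := by
        rw [(hρ.1.1.sub hσ.1.1).eq_tracelessHermitian htr]
        exact traceNorm_AD_tracelessHermitian_le ⟨hγ0.le, hγ1.le⟩ _ _
    _ ≤ max (1 - γ / 2) (γ / 2) * traceNorm (ρ - σ) :=
        mul_le_mul_of_nonneg_right (hsqrt.trans (le_max_left _ _)) (traceNorm_nonneg _)
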